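/- arXiv:2109.05754 — 3 statements merged into one kernel-verified Lean document; each statement's English description precedes it below -/
import Mathlib

section
/- Consider the controlled SEIR model. The following are equivalent: (i) for every point (S0, E0, I0) ∈ G_Π there exists an admissible controlled trajectory (S, E, I, β, γ) with (S(t0), E(t0), I(t0)) = (S0, E0, I0) and (S(t), E(t), I(t)) ∈ G_Π for all t ≥ t0 (i.e. the admissible set equals G_Π); (ii) η (1 − I_max) ≤ γ_max I_max. -/
/-!
If `η (1 - I_max) ≤ γ_max I_max`, use the constant controls `β = β_min` and `γ = γ_max`.
Composing the SEIR field with the coordinatewise projection onto `[0, 1]` gives a bounded, globally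
Lipschitz field, so its integral curves exist for all time. Such a curve cannot leave `G_Π`:
wherever `S`, `E` or `I` is negative its derivative is nonnegative, `S + E + I` never increases,
and inside the simplex `GPiSEIR 1` (where the projection is the identity) `I > I_max` forces
`I' ≤ η (1 - I) - γ_max I ≤ η (1 - I_max) - γ_max I_max ≤ 0`. Hence the curve stays in `G_Π` and
solves the untruncated system there.

Conversely, starting from `(0, 1 - I_max, I_max)` the constraint `I ≤ I_max` forces `I'(t₀) ≤ 0`,
that is `η (1 - I_max) ≤ γ(t₀) I_max ≤ γ_max I_max`.
-/

/-- The constraint set `G_Π` for the SEIR model: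
`{(S, E, I) : S ≥ 0, E ≥ 0, I ≥ 0, S + E + I ≤ 1, I ≤ I_max}`. -/
def GPiSEIR (Imax : ℝ) : Set (ℝ × ℝ × ℝ) :=
  {p | 0 ≤ p.1 ∧ 0 ≤ p.2.1 ∧ 0 ≤ p.2.2 ∧ p.1 + p.2.1 + p.2.2 ≤ 1 ∧ p.2.2 ≤ Imax}

open Set Topology
open scoped NNReal

section GlobalExistence

variable {E : Type*} [NormedAddCommGroup E] [NormedSpace ℝ E] [CompleteSpace E]
  {v : E → E} {K L : ℝ≥0}

theorem exists_forall_mem_Ioo_hasDerivAt_of_lipschitzWith_of_norm_le (hv : LipschitzWith K v)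
    (hL : ∀ x, ‖v x‖ ≤ L) (t₀ : ℝ) (x₀ : E) (T : ℝ≥0) :
    ∃ γ : ℝ → E, γ t₀ = x₀ ∧ ∀ t ∈ Ioo (t₀ - T) (t₀ + T), HasDerivAt γ (v (γ t)) t := by
  have hpl : IsPicardLindelof (fun _ ↦ v)
      (⟨t₀, by simp⟩ : Icc (t₀ - T) (t₀ + T)) x₀ (L * T) 0 L K :=
    { lipschitzOnWith := fun _ _ ↦ hv.lipschitzOnWith
      continuousOn := fun _ _ ↦ continuousOn_const
      norm_le := fun _ _ x _ ↦ hL x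
      mul_max_le := by simp }
  obtain ⟨γ, hγ₀, hγ⟩ := hpl.exists_eq_forall_mem_Icc_hasDerivWithinAt₀
  exact ⟨γ, hγ₀, fun t ht ↦ (hγ t (Ioo_subset_Icc_self ht)).hasDerivAt (Icc_mem_nhds ht.1 ht.2)⟩

theorem exists_isIntegralCurve_of_lipschitzWith_of_norm_le (hv : LipschitzWith K v)
    (hL : ∀ x, ‖v x‖ ≤ L) (t₀ : ℝ) (x₀ : E) :
    ∃ γ : ℝ → E, γ t₀ = x₀ ∧ IsIntegralCurve γ (fun _ ↦ v) := by
  choose γ hγ₀ hγ using fun n : ℕ ↦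
    exists_forall_mem_Ioo_hasDerivAt_of_lipschitzWith_of_norm_le hv hL t₀ x₀ n
  -- The local solutions on `(t₀ - n, t₀ + n)` agree by uniqueness, so they glue together.
  have hagree : ∀ n m : ℕ, n ≤ m → EqOn (γ m) (γ n) (Ioo (t₀ - n) (t₀ + n)) := by
    intro n m hnm t ht
    have hsub : Ioo (t₀ - n) (t₀ + n) ⊆ Ioo (t₀ - m) (t₀ + m) :=
      Ioo_subset_Ioo (by gcongr) (by gcongr)
    have hn : (0 : ℝ) < n := by linarith [ht.1, ht.2]
    exact ODE_solution_unique_of_mem_Ioo (s := fun _ ↦ univ) (fun _ _ ↦ hv.lipschitzOnWith)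
      ⟨by linarith, by linarith⟩ (fun s hs ↦ ⟨hγ m s (hsub hs), trivial⟩)
      (fun s hs ↦ ⟨hγ n s hs, trivial⟩) ((hγ₀ m).trans (hγ₀ n).symm) ht
  set N : ℝ → ℕ := fun t ↦ ⌈|t - t₀|⌉₊ + 1
  have hN : ∀ t, t ∈ Ioo (t₀ - N t) (t₀ + N t) := by
    intro t
    have := abs_lt.1 (show |t - t₀| < N t by push_cast [N]; linarith [Nat.le_ceil |t - t₀|])
    constructor <;> linarith
  have hloc : ∀ t, (fun s ↦ γ (N s) s) =ᶠ[𝓝 t] γ (N t) := by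
    intro t
    filter_upwards [Ioo_mem_nhds (hN t).1 (hN t).2] with s hs
    rcases le_total (N s) (N t) with h | h
    · exact (hagree _ _ h (hN s)).symm
    · exact hagree _ _ h hs
  exact ⟨fun t ↦ γ (N t) t, hγ₀ _, fun t ↦ (hγ (N t) t (hN t)).congr_of_eventuallyEq (hloc t)⟩

end GlobalExistence

theorem LocallyLipschitz.exists_lipschitzWith_comp {α β γ : Type*} [PseudoMetricSpace α]
    [PseudoMetricSpace β] [PseudoMetricSpace γ] {f : β → γ} (hf : LocallyLipschitz f)
    {r : α → β} {Kr : ℝ≥0} (hr : LipschitzWith Kr r) {s : Set β} (hs : IsCompact s)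
    (hrs : ∀ x, r x ∈ s) : ∃ K, LipschitzWith K (f ∘ r) := by
  obtain ⟨K, hK⟩ := (hf.locallyLipschitzOn (s := s)).exists_lipschitzOnWith_of_compact hs
  exact ⟨K * Kr, lipschitzOnWith_univ.1 <| hK.comp hr.lipschitzOnWith fun x _ ↦ hrs x⟩

theorem nonneg_of_hasDerivAt_nonneg_of_neg {u u' : ℝ → ℝ} {a : ℝ}
    (hu : ∀ t ≥ a, HasDerivAt u (u' t) t) (ha : 0 ≤ u a)
    (hu' : ∀ t ≥ a, u t < 0 → 0 ≤ u' t) {t : ℝ} (ht : a ≤ t) : 0 ≤ u t := by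
  by_contra! hneg
  have hcont : ContinuousOn u (Icc a t) :=
    fun x hx ↦ (hu x hx.1).continuousAt.continuousWithinAt
  -- `s` is the last time in `[a, t]` at which `u ≥ 0`; on `(s, t]` `u` is negative, hence monotone.
  obtain ⟨s, ⟨hs, hs₀⟩, hsmax⟩ := (isCompact_Icc.of_isClosed_subset
    (hcont.preimage_isClosed_of_isClosed isClosed_Icc isClosed_Ici)
      inter_subset_left).exists_isGreatest ⟨a, left_mem_Icc.2 ht, ha⟩
  have hneg_Ioc : ∀ x ∈ Ioc s t, u x < 0 := fun x hx ↦ by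
    by_contra! h
    exact (hsmax ⟨⟨hs.1.trans hx.1.le, hx.2⟩, h⟩).not_gt hx.1
  have hmono : MonotoneOn u (Icc s t) := by
    refine monotoneOn_of_hasDerivWithinAt_nonneg (f' := u') (convex_Icc s t)
      (hcont.mono (Icc_subset_Icc_left hs.1)) (fun x hx ↦ ?_) (fun x hx ↦ ?_) <;>
      rw [interior_Icc] at hx
    · exact (hu x (hs.1.trans hx.1.le)).hasDerivWithinAt
    · exact hu' x (hs.1.trans hx.1.le) (hneg_Ioc x ⟨hx.1, hx.2.le⟩)
  have := hmono ⟨le_rfl, hs.2⟩ ⟨hs.2, le_rfl⟩ hs.2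
  simp only [mem_preimage, mem_Ici] at hs₀
  linarith

theorem HasDerivWithinAt.nonpos_of_isMaxOn_Ici {f : ℝ → ℝ} {f' a : ℝ}
    (hf : HasDerivWithinAt f f' (Ici a) a) (hmax : IsMaxOn f (Ici a) a) : f' ≤ 0 := by
  have := hmax.localize.hasFDerivWithinAt_nonpos hf.hasFDerivWithinAt
    (y := 1) (mem_posTangentConeAt_of_segment_subset ?_)
  · simpa using this
  · rw [segment_eq_Icc (by linarith)]
    exact Icc_subset_Ici_self

def unitClamp (x : ℝ) : ℝ := max 0 (min x 1)

lemma unitClamp_nonneg (x : ℝ) : 0 ≤ unitClamp x := le_max_left _ _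

lemma unitClamp_le_one (x : ℝ) : unitClamp x ≤ 1 := max_le zero_le_one (min_le_right _ _)

lemma unitClamp_of_nonpos {x : ℝ} (hx : x ≤ 0) : unitClamp x = 0 :=
  max_eq_left (min_le_of_left_le hx)

lemma unitClamp_of_mem {x : ℝ} (h₀ : 0 ≤ x) (h₁ : x ≤ 1) : unitClamp x = x := by
  simp [unitClamp, h₀, h₁]

lemma lipschitzWith_unitClamp : LipschitzWith 1 unitClamp :=
  (LipschitzWith.id.min_const 1).const_max 0

def cubeClamp (p : ℝ × ℝ × ℝ) : ℝ × ℝ × ℝ := (unitClamp p.1, unitClamp p.2.1, unitClamp p.2.2)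

lemma cubeClamp_mem_Icc (p : ℝ × ℝ × ℝ) : cubeClamp p ∈ Icc 0 1 := by
  simp [cubeClamp, Prod.le_def, unitClamp_nonneg, unitClamp_le_one]

lemma lipschitzWith_cubeClamp : LipschitzWith 1 cubeClamp := by
  have h := lipschitzWith_unitClamp
  unfold cubeClamp
  simpa using (h.comp LipschitzWith.prod_fst).prodMk
    ((h.comp (LipschitzWith.prod_fst.comp LipschitzWith.prod_snd)).prodMk
      (h.comp (LipschitzWith.prod_snd.comp LipschitzWith.prod_snd)))

lemma GPiSEIR_subset_one (Imax : ℝ) : GPiSEIR Imax ⊆ GPiSEIR 1 :=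
  fun _ ⟨hS, hE, hI, hsum, _⟩ ↦ ⟨hS, hE, hI, hsum, by linarith⟩

lemma cubeClamp_of_mem {p : ℝ × ℝ × ℝ} (hp : p ∈ GPiSEIR 1) : cubeClamp p = p := by
  obtain ⟨hS, hE, hI, hsum, -⟩ := hp
  simp only [cubeClamp, unitClamp_of_mem hS (by linarith), unitClamp_of_mem hE (by linarith),
    unitClamp_of_mem hI (by linarith)]

def seirField (β η γ : ℝ) (p : ℝ × ℝ × ℝ) : ℝ × ℝ × ℝ :=
  (-(β * p.1 * p.2.2), β * p.1 * p.2.2 - η * p.2.1, η * p.2.1 - γ * p.2.2)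

lemma contDiff_seirField (β η γ : ℝ) : ContDiff ℝ 1 (seirField β η γ) := by
  unfold seirField
  fun_prop

lemma exists_isIntegralCurve_seirField_comp_cubeClamp (β η γ t₀ : ℝ) (x₀ : ℝ × ℝ × ℝ) :
    ∃ φ : ℝ → ℝ × ℝ × ℝ, φ t₀ = x₀ ∧ IsIntegralCurve φ (fun _ ↦ seirField β η γ ∘ cubeClamp) := by
  have hf := contDiff_seirField β η γ
  obtain ⟨K, hK⟩ := hf.locallyLipschitz.exists_lipschitzWith_comp lipschitzWith_cubeClamp
    isCompact_Icc cubeClamp_mem_Icc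
  obtain ⟨L, hL⟩ := isCompact_Icc.exists_bound_of_continuousOn (s := Icc (0 : ℝ × ℝ × ℝ) 1)
    hf.continuous.continuousOn
  exact exists_isIntegralCurve_of_lipschitzWith_of_norm_le hK (L := L.toNNReal)
    (fun p ↦ (hL _ (cubeClamp_mem_Icc p)).trans (Real.le_coe_toNNReal L)) t₀ x₀

section Invariance

variable {β η γ t₀ : ℝ} {φ : ℝ → ℝ × ℝ × ℝ}

lemma mem_GPiSEIR_one_of_isIntegralCurve (hβ : 0 ≤ β) (hη : 0 ≤ η) (hγ : 0 ≤ γ)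
    (hφ : IsIntegralCurve φ (fun _ ↦ seirField β η γ ∘ cubeClamp)) (h₀ : φ t₀ ∈ GPiSEIR 1) :
    ∀ t ≥ t₀, φ t ∈ GPiSEIR 1 := by
  obtain ⟨hS₀, hE₀, hI₀, hsum₀, -⟩ := h₀
  have hS : ∀ t, HasDerivAt (fun t ↦ (φ t).1)
      (-(β * unitClamp (φ t).1 * unitClamp (φ t).2.2)) t := fun t ↦ (hφ t).fst
  have hE : ∀ t, HasDerivAt (fun t ↦ (φ t).2.1)
      (β * unitClamp (φ t).1 * unitClamp (φ t).2.2 - η * unitClamp (φ t).2.1) t :=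
    fun t ↦ (hφ t).snd.fst
  have hI : ∀ t, HasDerivAt (fun t ↦ (φ t).2.2)
      (η * unitClamp (φ t).2.1 - γ * unitClamp (φ t).2.2) t := fun t ↦ (hφ t).snd.snd
  have hS_nonneg : ∀ t ≥ t₀, 0 ≤ (φ t).1 := fun t ↦
    nonneg_of_hasDerivAt_nonneg_of_neg (fun t _ ↦ hS t) hS₀ fun t _ h ↦ by
      simp [unitClamp_of_nonpos h.le]
  have hE_nonneg : ∀ t ≥ t₀, 0 ≤ (φ t).2.1 := fun t ↦
    nonneg_of_hasDerivAt_nonneg_of_neg (fun t _ ↦ hE t) hE₀ fun t _ h ↦ by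
      rw [unitClamp_of_nonpos h.le]
      linarith [mul_nonneg (mul_nonneg hβ (unitClamp_nonneg (φ t).1)) (unitClamp_nonneg (φ t).2.2)]
  have hI_nonneg : ∀ t ≥ t₀, 0 ≤ (φ t).2.2 := fun t ↦
    nonneg_of_hasDerivAt_nonneg_of_neg (fun t _ ↦ hI t) hI₀ fun t _ h ↦ by
      rw [unitClamp_of_nonpos h.le]
      linarith [mul_nonneg hη (unitClamp_nonneg (φ t).2.1)]
  have hsum : ∀ t ≥ t₀, (φ t).1 + (φ t).2.1 + (φ t).2.2 ≤ 1 := fun t ht ↦ by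
    have := nonneg_of_hasDerivAt_nonneg_of_neg
      (u := fun t ↦ 1 - ((φ t).1 + (φ t).2.1 + (φ t).2.2))
      (fun t _ ↦ (hasDerivAt_const t 1).sub (((hS t).add (hE t)).add (hI t)))
      (by linarith) (fun t _ _ ↦ by linarith [mul_nonneg hγ (unitClamp_nonneg (φ t).2.2)]) ht
    linarith
  exact fun t ht ↦ ⟨hS_nonneg t ht, hE_nonneg t ht, hI_nonneg t ht, hsum t ht,
    by linarith [hS_nonneg t ht, hE_nonneg t ht, hsum t ht]⟩

lemma IsIntegralCurve.hasDerivAt_seirField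
    (hφ : IsIntegralCurve φ (fun _ ↦ seirField β η γ ∘ cubeClamp)) {t : ℝ}
    (ht : φ t ∈ GPiSEIR 1) : HasDerivAt φ (seirField β η γ (φ t)) t := by
  simpa only [Function.comp_apply, cubeClamp_of_mem ht] using hφ t

lemma mem_GPiSEIR_of_isIntegralCurve {Imax : ℝ} (hβ : 0 ≤ β) (hη : 0 ≤ η) (hγ : 0 ≤ γ)
    (hcond : η * (1 - Imax) ≤ γ * Imax)
    (hφ : IsIntegralCurve φ (fun _ ↦ seirField β η γ ∘ cubeClamp)) (h₀ : φ t₀ ∈ GPiSEIR Imax) :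
    ∀ t ≥ t₀, φ t ∈ GPiSEIR Imax := by
  have hΔ := mem_GPiSEIR_one_of_isIntegralCurve hβ hη hγ hφ (GPiSEIR_subset_one Imax h₀)
  have hImax : ∀ t ≥ t₀, 0 ≤ Imax - (φ t).2.2 := fun t ↦
    nonneg_of_hasDerivAt_nonneg_of_neg (u := fun t ↦ Imax - (φ t).2.2)
      (fun t ht ↦ (hasDerivAt_const t Imax).sub (hφ.hasDerivAt_seirField (hΔ t ht)).snd.snd)
      (by linarith [h₀.2.2.2.2]) fun t ht h ↦ by
        obtain ⟨hS, -, -, hsum, -⟩ := hΔ t ht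
        have hE_le : η * (φ t).2.1 ≤ η * (1 - (φ t).2.2) := by gcongr; linarith
        have hI_gt : Imax ≤ (φ t).2.2 := by linarith
        simp only [seirField]
        linarith [mul_le_mul_of_nonneg_left hI_gt hη, mul_le_mul_of_nonneg_left hI_gt hγ]
  exact fun t ht ↦ ⟨(hΔ t ht).1, (hΔ t ht).2.1, (hΔ t ht).2.2.1, (hΔ t ht).2.2.2.1,
    by linarith [hImax t ht]⟩

end Invariance

theorem exists_seir_trajectory {β η γ Imax : ℝ} (hβ : 0 ≤ β) (hη : 0 ≤ η) (hγ : 0 ≤ γ)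
    (hcond : η * (1 - Imax) ≤ γ * Imax) (t₀ : ℝ) {x₀ : ℝ × ℝ × ℝ} (hx₀ : x₀ ∈ GPiSEIR Imax) :
    ∃ φ : ℝ → ℝ × ℝ × ℝ, φ t₀ = x₀ ∧ Differentiable ℝ φ ∧
      ∀ t ≥ t₀, HasDerivAt φ (seirField β η γ (φ t)) t ∧ φ t ∈ GPiSEIR Imax := by
  obtain ⟨φ, hφ₀, hφ⟩ := exists_isIntegralCurve_seirField_comp_cubeClamp β η γ t₀ x₀
  have hG := mem_GPiSEIR_of_isIntegralCurve hβ hη hγ hcond hφ (hφ₀ ▸ hx₀)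
  exact ⟨φ, hφ₀, fun t ↦ (hφ t).differentiableAt, fun t ht ↦
    ⟨hφ.hasDerivAt_seirField (GPiSEIR_subset_one Imax (hG t ht)), hG t ht⟩⟩

theorem seir_admissible_eq_GPi_iff_general
    (η βmin βmax γmin γmax Imax t0 : ℝ)
    (hη : 0 < η) (hβmin : 0 < βmin) (hβ : βmin ≤ βmax)
    (hγ : γmin ≤ γmax)
    (hI0 : 0 < Imax) (hI1 : Imax < 1) :
    (∀ S0 E0 I0 : ℝ, (S0, E0, I0) ∈ GPiSEIR Imax →
        ∃ S E I β γ : ℝ → ℝ,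
          Differentiable ℝ S ∧ Differentiable ℝ E ∧ Differentiable ℝ I ∧
          (∀ t, t0 ≤ t → β t ∈ Set.Icc βmin βmax) ∧
          (∀ t, t0 ≤ t → γ t ∈ Set.Icc γmin γmax) ∧
          (∀ t, t0 ≤ t → HasDerivAt S (-(β t * S t * I t)) t) ∧
          (∀ t, t0 ≤ t → HasDerivAt E (β t * S t * I t - η * E t) t) ∧
          (∀ t, t0 ≤ t → HasDerivAt I (η * E t - γ t * I t) t) ∧
          S t0 = S0 ∧ E t0 = E0 ∧ I t0 = I0 ∧
          (∀ t, t0 ≤ t → (S t, E t, I t) ∈ GPiSEIR Imax))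
      ↔ η * (1 - Imax) ≤ γmax * Imax := by
  constructor
  · intro hadm
    obtain ⟨S, E, I, β, γ, -, -, -, -, hγt, -, -, hI', -, hE₀, hI₀, hG⟩ :=
      hadm 0 (1 - Imax) Imax ⟨le_rfl, by linarith, hI0.le, by linarith, le_rfl⟩
    have hmax : IsMaxOn I (Ici t0) t0 := fun t ht ↦ hI₀ ▸ (hG t ht).2.2.2.2
    have hI'₀ := (hI' t0 le_rfl).hasDerivWithinAt.nonpos_of_isMaxOn_Ici hmax
    rw [hE₀, hI₀] at hI'₀
    nlinarith [(hγt t0 le_rfl).2]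
  · intro hcond S0 E0 I0 hx₀
    have hγmax : 0 ≤ γmax :=
      (mul_nonneg_iff_of_pos_right hI0).1 ((mul_nonneg hη.le (by linarith)).trans hcond)
    obtain ⟨φ, hφ₀, hφd, hφ⟩ := exists_seir_trajectory hβmin.le hη.le hγmax hcond t0 hx₀
    exact ⟨fun t ↦ (φ t).1, fun t ↦ (φ t).2.1, fun t ↦ (φ t).2.2, fun _ ↦ βmin, fun _ ↦ γmax,
      hφd.fst, hφd.snd.fst, hφd.snd.snd, fun _ _ ↦ ⟨le_rfl, hβ⟩, fun _ _ ↦ ⟨hγ, le_rfl⟩,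
      fun t ht ↦ (hφ t ht).1.fst, fun t ht ↦ (hφ t ht).1.snd.fst, fun t ht ↦ (hφ t ht).1.snd.snd,
      by simp [hφ₀], by simp [hφ₀], by simp [hφ₀], fun t ht ↦ (hφ t ht).2⟩

/-- The admissible set of the controlled SEIR model equals `G_Π` iff
`η (1 − I_max) ≤ γ_max I_max`. -/
theorem seir_admissible_eq_GPi_iff
    (η βmin βmax γmin γmax Imax t0 : ℝ)
    (hη : 0 < η) (hβmin : 0 < βmin) (hβ : βmin ≤ βmax)
    (hγmin : 0 < γmin) (hγ : γmin ≤ γmax)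
    (hI0 : 0 < Imax) (hI1 : Imax < 1) :
    (∀ S0 E0 I0 : ℝ, (S0, E0, I0) ∈ GPiSEIR Imax →
        ∃ S E I β γ : ℝ → ℝ,
          Differentiable ℝ S ∧ Differentiable ℝ E ∧ Differentiable ℝ I ∧
          (∀ t, t0 ≤ t → β t ∈ Set.Icc βmin βmax) ∧
          (∀ t, t0 ≤ t → γ t ∈ Set.Icc γmin γmax) ∧
          (∀ t, t0 ≤ t → HasDerivAt S (-(β t * S t * I t)) t) ∧
          (∀ t, t0 ≤ t → HasDerivAt E (β t * S t * I t - η * E t) t) ∧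
          (∀ t, t0 ≤ t → HasDerivAt I (η * E t - γ t * I t) t) ∧
          S t0 = S0 ∧ E t0 = E0 ∧ I t0 = I0 ∧
          (∀ t, t0 ≤ t → (S t, E t, I t) ∈ GPiSEIR Imax))
      ↔ η * (1 - Imax) ≤ γmax * Imax :=
  seir_admissible_eq_GPi_iff_general η βmin βmax γmin γmax Imax t0 hη hβmin hβ hγ hI0 hI1
end

section
/- Consider the closed-loop uncertain SEIR model under the affine feedbacks β̂ and γ̂. The following are equivalent: (i) every uncertain trajectory (S, E, I, η) with (S(t0), E(t0), I(t0)) ∈ G_Π satisfies (S(t), E(t), I(t)) ∈ G_Π for all t ≥ t0 (i.e. the maximal robust positively invariant set of the closed-loop system equals G_Π); (ii) η_max (1 − I_max) ≤ γ_max I_max. -/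
/-- The affine feedback `β̂(I) = β_min (I/I_max) + β_max (1 − I/I_max)`. -/
noncomputable def betaHat (βmin βmax Imax i : ℝ) : ℝ :=
  βmin * (i / Imax) + βmax * (1 - i / Imax)

/-- The affine feedback `γ̂(I) = γ_min (1 − I/I_max) + γ_max (I/I_max)`. -/
noncomputable def gammaHat (γmin γmax Imax i : ℝ) : ℝ :=
  γmin * (1 - i / Imax) + γmax * (i / Imax)

open Set Filter Topology Real

theorem HasDerivAt.nonpos_of_eventually_ge_left {f : ℝ → ℝ} {f' x : ℝ} (hf : HasDerivAt f f' x)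
    (h : ∀ᶠ s in 𝓝[<] x, f x ≤ f s) : f' ≤ 0 := by
  refine le_of_tendsto ((hasDerivAt_iff_tendsto_slope.1 hf).mono_left (nhdsLT_le_nhdsNE x)) ?_
  filter_upwards [h, self_mem_nhdsWithin] with s hs hsx
  rw [slope_def_field]
  exact div_nonpos_of_nonneg_of_nonpos (sub_nonneg.2 hs) (sub_nonpos.2 (le_of_lt hsx))

theorem HasDerivAt.nonpos_of_eventually_le_right {f : ℝ → ℝ} {f' x : ℝ} (hf : HasDerivAt f f' x)
    (h : ∀ᶠ s in 𝓝[>] x, f s ≤ f x) : f' ≤ 0 := by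
  refine le_of_tendsto ((hasDerivAt_iff_tendsto_slope.1 hf).mono_left (nhdsGT_le_nhdsNE x)) ?_
  filter_upwards [h, self_mem_nhdsWithin] with s hs hsx
  rw [slope_def_field]
  exact div_nonpos_of_nonpos_of_nonneg (sub_nonpos.2 hs) (sub_nonneg.2 (le_of_lt hsx))

theorem pos_of_hasDerivAt_pos_of_eq_zero {ι : Type*} [Finite ι] {φ : ι → ℝ → ℝ} {a b : ℝ}
    (hφ : ∀ i, ContinuousOn (φ i) (Icc a b)) (ha : ∀ i, 0 < φ i a)
    (htouch : ∀ i, ∀ τ ∈ Ioc a b, φ i τ = 0 → (∀ j, 0 ≤ φ j τ) →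
      ∃ d, HasDerivAt (φ i) d τ ∧ 0 < d) :
    ∀ i, ∀ t ∈ Icc a b, 0 < φ i t := by
  by_contra! hbad
  obtain ⟨i₀, t₀, ht₀, hi₀⟩ := hbad
  set B := ⋃ i, Icc a b ∩ φ i ⁻¹' Iic 0
  have hB : IsClosed B :=
    isClosed_iUnion_of_finite fun i =>
      (hφ i).preimage_isClosed_of_isClosed isClosed_Icc isClosed_Iic
  have hBbdd : BddBelow B := ⟨a, fun s hs => (mem_iUnion.1 hs).choose_spec.1.1⟩
  obtain ⟨i, ⟨haτ, hτb⟩, hiτ⟩ := mem_iUnion.1 (hB.csInf_mem ⟨t₀, mem_iUnion.2 ⟨i₀, ht₀, hi₀⟩⟩ hBbdd)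
  set τ := sInf B
  have hbefore : ∀ j, ∀ s ∈ Ico a τ, 0 < φ j s := fun j s hs => by
    by_contra! h
    exact (csInf_le hBbdd (mem_iUnion.2 ⟨j, ⟨hs.1, hs.2.le.trans hτb⟩, h⟩)).not_gt hs.2
  have haτ' : a < τ := haτ.lt_of_ne fun h => (ha i).not_ge (h ▸ hiτ)
  have hτ : ∀ j, 0 ≤ φ j τ := fun j => by
    have := right_nhdsWithin_Ioo_neBot haτ'
    refine ge_of_tendsto (((hφ j) τ ⟨haτ, hτb⟩).mono (Ioo_subset_Icc_self.trans
      (Icc_subset_Icc_right hτb))) ?_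
    filter_upwards [self_mem_nhdsWithin] with s hs using (hbefore j s ⟨hs.1.le, hs.2⟩).le
  obtain ⟨d, hd, hdpos⟩ := htouch i τ ⟨haτ', hτb⟩ (le_antisymm hiτ (hτ i)) hτ
  refine hdpos.not_ge (hd.nonpos_of_eventually_ge_left ?_)
  filter_upwards [Ioo_mem_nhdsLT haτ'] with s hs
  rw [le_antisymm hiτ (hτ i)]
  exact (hbefore i s ⟨hs.1.le, hs.2⟩).le

theorem nonneg_of_hasDerivAt_ge_neg_mul_of_eq_neg {ι : Type*} [Finite ι] {φ : ι → ℝ → ℝ}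
    {a b r L : ℝ} (hr : 0 < r) (hφ : ∀ i, ContinuousOn (φ i) (Icc a b)) (ha : ∀ i, 0 ≤ φ i a)
    (htouch : ∀ i, ∀ τ ∈ Ioc a b, ∀ w ∈ Ioc 0 r, φ i τ = -w → (∀ j, -w ≤ φ j τ) →
      ∃ d, HasDerivAt (φ i) d τ ∧ -(L * w) ≤ d) :
    ∀ i, ∀ t ∈ Icc a b, 0 ≤ φ i t := by
  intro i t ht
  set K := L + 1
  set W : ℝ → ℝ := fun s => exp (K * (s - a))
  have hW : ∀ s, HasDerivAt W (K * W s) s := fun s => by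
    simpa [W, mul_comm] using (((hasDerivAt_id s).sub_const a).const_mul K).exp
  have hWc : Continuous W := continuous_iff_continuousAt.2 fun s => (hW s).continuousAt
  set C := exp (|K| * (b - a))
  have hWC : ∀ s ∈ Icc a b, W s ≤ C := fun s hs => exp_le_exp.2 <|
    (mul_le_mul_of_nonneg_right (le_abs_self K) (sub_nonneg.2 hs.1)).trans
      (mul_le_mul_of_nonneg_left (by linarith [hs.2]) (abs_nonneg K))
  -- Perturbing by `ε W`, whose growth rate `L + 1` beats the permitted decay rate `L`,
  -- makes every touching strict.
  have hpert : ∀ ε ∈ Ioo 0 (r / C), 0 < φ i t + ε * W t := by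
    rintro ε ⟨hε, hεr⟩
    rw [lt_div_iff₀ (exp_pos _)] at hεr
    refine pos_of_hasDerivAt_pos_of_eq_zero (φ := fun j s => φ j s + ε * W s)
      (fun j => (hφ j).add (continuousOn_const.mul hWc.continuousOn))
      (fun j => by simpa [W] using add_pos_of_nonneg_of_pos (ha j) hε) ?_ i t ht
    intro j τ hτ hj hall
    have hwpos : 0 < ε * W τ := mul_pos hε (exp_pos _)
    have hwr : ε * W τ ≤ r :=
      (mul_le_mul_of_nonneg_left (hWC τ (Ioc_subset_Icc_self hτ)) hε.le).trans hεr.le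
    obtain ⟨d, hd, hdL⟩ := htouch j τ hτ (ε * W τ) ⟨hwpos, hwr⟩ (by linarith [hj])
      fun k => by linarith [hall k]
    refine ⟨d + ε * (K * W τ), hd.add ((hW τ).const_mul ε), ?_⟩
    nlinarith
  have hlim : Tendsto (fun ε => φ i t + ε * W t) (𝓝[>] 0) (𝓝 (φ i t)) :=
    ((continuous_const.add (continuous_id.mul continuous_const)).tendsto' 0 _
      (by simp)).mono_left nhdsWithin_le_nhds
  exact ge_of_tendsto hlim (by
    filter_upwards [Ioo_mem_nhdsGT (div_pos hr (exp_pos _))] with ε hε using (hpert ε hε).le)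

open scoped NNReal in
theorem exists_forall_hasDerivAt_of_lipschitzWith_of_norm_le {E : Type*} [NormedAddCommGroup E]
    [NormedSpace ℝ E] [CompleteSpace E] {F : ℝ → E → E} {K C : ℝ≥0}
    (hlip : ∀ t, LipschitzWith K (F t)) (hcont : ∀ x, Continuous (F · x))
    (hbdd : ∀ t x, ‖F t x‖ ≤ C) (t₀ : ℝ) (x₀ : E) :
    ∃ f : ℝ → E, f t₀ = x₀ ∧ ∀ t, HasDerivAt f (F t (f t)) t := by
  -- Solutions on `[t₀ - n, t₀ + n]` (Picard–Lindelöf with radius `C n`) agree on overlaps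
  -- by uniqueness, so they glue to a global one.
  have hloc : ∀ n : ℕ, ∃ g : ℝ → E, g t₀ = x₀ ∧ ∀ t ∈ Icc (t₀ - n) (t₀ + n),
      HasDerivWithinAt g (F t (g t)) (Icc (t₀ - n) (t₀ + n)) t := fun n =>
    IsPicardLindelof.exists_eq_forall_mem_Icc_hasDerivWithinAt₀
      (t₀ := ⟨t₀, by simp⟩) (a := C * n) (L := C) (K := K)
      { lipschitzOnWith := fun t _ => (hlip t).lipschitzOnWith
        continuousOn := fun x _ => (hcont x).continuousOn
        norm_le := fun t _ x _ => hbdd t x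
        mul_max_le := by simp }
  choose g hg₀ hg using hloc
  have hgderiv : ∀ n : ℕ, ∀ t, dist t t₀ < n → HasDerivAt (g n) (F t (g n t)) t := by
    intro n t ht
    rw [Real.dist_eq, abs_lt] at ht
    exact (hg n t ⟨by linarith, by linarith⟩).hasDerivAt (Icc_mem_nhds (by linarith) (by linarith))
  have hglue : ∀ m n : ℕ, ∀ t, dist t t₀ < m → dist t t₀ < n → g m t = g n t := by
    intro m n t hm hn
    have hsub : Metric.ball t₀ (min (m : ℝ) n) ⊆ Metric.ball t₀ m ∩ Metric.ball t₀ n :=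
      fun s hs => ⟨Metric.ball_subset_ball (min_le_left _ _) hs,
        Metric.ball_subset_ball (min_le_right _ _) hs⟩
    have hpos : (0 : ℝ) < min (m : ℝ) n := dist_nonneg.trans_lt (lt_min hm hn)
    rw [Real.ball_eq_Ioo] at hsub
    refine ODE_solution_unique_of_mem_Ioo (v := F) (s := fun _ => univ) (t₀ := t₀)
      (fun t _ => (hlip t).lipschitzOnWith) ⟨by linarith, by linarith⟩
      (fun s hs => ⟨hgderiv m s (hsub hs).1, trivial⟩)
      (fun s hs => ⟨hgderiv n s (hsub hs).2, trivial⟩)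
      (by rw [hg₀, hg₀]) ?_
    rw [← Real.ball_eq_Ioo]
    exact lt_min hm hn
  have hN : ∀ t, dist t t₀ < (⌈dist t t₀⌉₊ + 1 : ℕ) := fun t => by
    push_cast; exact (Nat.le_ceil _).trans_lt (lt_add_one _)
  refine ⟨fun t => g (⌈dist t t₀⌉₊ + 1) t, by simp [hg₀], fun t => ?_⟩
  refine (hgderiv _ t (hN t)).congr_of_eventuallyEq ?_
  filter_upwards [Metric.isOpen_ball.mem_nhds (hN t)] with s hs
  exact hglue _ _ s (hN s) hs

theorem neg_le_mul_and_mul_le_of_neg_le {x y a b X Y : ℝ} (hx : -a ≤ x) (hxX : x ≤ X)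
    (hy : -b ≤ y) (hyY : y ≤ Y) (ha : 0 ≤ a) (hb : 0 ≤ b) (hX : 0 ≤ X) (hY : 0 ≤ Y) :
    -(a * Y + X * b) ≤ x * y ∧ x * y ≤ X * Y + a * b := by
  have hx' : 0 ≤ x + a := by linarith
  have hy' : 0 ≤ y + b := by linarith
  have hX' : 0 ≤ X - x := by linarith
  have hY' : 0 ≤ Y - y := by linarith
  constructor <;> rcases le_total 0 x with h | h <;> rcases le_total 0 y with h' | h' <;>
    nlinarith [mul_nonneg ha hY, mul_nonneg hX hb, mul_nonneg hX hY, mul_nonneg ha hb]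

theorem mul_mem_Icc_of_mem_Icc {R w x y : ℝ} (hR : 0 ≤ R) (hw : 0 ≤ w) (hw1 : w ≤ 1)
    (hx : x ∈ Icc (-(R * w)) R) (hy : y ∈ Icc (-(R * w)) R) :
    x * y ∈ Icc (-(2 * R ^ 2 * w)) (2 * R ^ 2) := by
  obtain ⟨h₁, h₂⟩ := neg_le_mul_and_mul_le_of_neg_le hx.1 hx.2 hy.1 hy.2 (by positivity)
    (by positivity) (by positivity) (by positivity)
  constructor <;> nlinarith [mul_le_mul_of_nonneg_left hw1 (by positivity : 0 ≤ R ^ 2 * w)]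

theorem neg_le_mul_mul_of_mem_Icc {R w x y z : ℝ} (hR : 0 ≤ R) (hw : 0 ≤ w) (hw1 : w ≤ 1)
    (hx : x ∈ Icc (-(R * w)) R) (hy : y ∈ Icc (-(R * w)) R) (hz : z ∈ Icc (-(R * w)) R) :
    -(4 * R ^ 3 * w) ≤ x * y * z := by
  have hxy := mul_mem_Icc_of_mem_Icc hR hw hw1 hx hy
  have := (neg_le_mul_and_mul_le_of_neg_le hxy.1 hxy.2 hz.1 hz.2 (by positivity) (by positivity)
    (by positivity) (by positivity)).1
  linarith

theorem mem_Ioo_of_hasDerivAt_of_pos_of_neg {x : ℝ → ℝ} {F : ℝ → ℝ → ℝ} {t₀ m M : ℝ}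
    (hx : ∀ t, t₀ ≤ t → HasDerivAt x (F t (x t)) t) (h₀ : x t₀ ∈ Ioo m M)
    (hm : ∀ t, t₀ < t → 0 < F t m) (hM : ∀ t, t₀ < t → F t M < 0) :
    ∀ t, t₀ ≤ t → x t ∈ Ioo m M := by
  intro t ht
  have h := pos_of_hasDerivAt_pos_of_eq_zero (φ := ![fun s => x s - m, fun s => M - x s])
    (a := t₀) (b := t) ?_ ?_ ?_
  · have h₀ := h 0 t ⟨ht, le_rfl⟩
    have h₁ := h 1 t ⟨ht, le_rfl⟩
    simp only [Matrix.cons_val_zero, Matrix.cons_val_one, Matrix.cons_val_fin_one] at h₀ h₁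
    exact ⟨by linarith, by linarith⟩
  · have hxc : ContinuousOn x (Icc t₀ t) := fun s hs =>
      (hx s hs.1).continuousAt.continuousWithinAt
    intro i
    fin_cases i
    exacts [hxc.sub continuousOn_const, continuousOn_const.sub hxc]
  · intro i
    fin_cases i <;> simp [h₀.1, h₀.2]
  intro i τ hτ hzero _
  fin_cases i
  · refine ⟨_, (hx τ hτ.1.le).sub_const m, ?_⟩
    simpa [show x τ = m by simpa [sub_eq_zero] using hzero] using hm τ hτ.1
  · refine ⟨_, (hx τ hτ.1.le).const_sub M, ?_⟩
    simpa [show x τ = M by simpa [sub_eq_zero, eq_comm] using hzero] using hM τ hτ.1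

theorem lipschitzWith_riccati_comp_projIcc {γ κ M : ℝ} (hγ : 0 ≤ γ) (hκ : 0 ≤ κ) (hM : 0 ≤ M) :
    LipschitzWith (γ + 2 * κ * M).toNNReal
      fun y => (γ + κ * projIcc 0 M hM y) * projIcc 0 M hM y := by
  refine LipschitzWith.of_dist_le' fun y z => ?_
  set p := (projIcc 0 M hM y : ℝ)
  set p' := (projIcc 0 M hM z : ℝ)
  have hpp' : |p - p'| ≤ |y - z| := by
    simpa [Subtype.dist_eq, Real.dist_eq] using (LipschitzWith.projIcc hM).dist_le_mul y z
  obtain ⟨hp0, hpM⟩ := (projIcc 0 M hM y).2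
  obtain ⟨hp0', hpM'⟩ := (projIcc 0 M hM z).2
  rw [Real.dist_eq, Real.dist_eq, show (γ + κ * p) * p - (γ + κ * p') * p' =
    (γ + κ * (p + p')) * (p - p') by ring, abs_mul, abs_of_nonneg (by positivity)]
  exact mul_le_mul (by nlinarith) hpp' (abs_nonneg _) (by positivity)

theorem exists_forall_hasDerivAt_riccati {γ κ U t₀ x₀ : ℝ} {u : ℝ → ℝ} (hγ : 0 < γ) (hκ : 0 ≤ κ)
    (hu : ContinuousOn u (Ici t₀)) (hu0 : ∀ t, t₀ ≤ t → 0 < u t) (huU : ∀ t, t₀ ≤ t → u t ≤ U)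
    (hx₀ : 0 < x₀) :
    ∃ x : ℝ → ℝ, Differentiable ℝ x ∧ x t₀ = x₀ ∧
      ∀ t, t₀ ≤ t → HasDerivAt x (u t - (γ + κ * x t) * x t) t := by
  set q : ℝ → ℝ := fun y => (γ + κ * y) * y
  have hU : 0 < U := (hu0 t₀ le_rfl).trans_le (huU t₀ le_rfl)
  -- Clamp the state to `[0, M]` and freeze `u` before `t₀`, so that the field is globally
  -- Lipschitz and bounded; since `q M > U`, the solution never reaches the clamp.
  set M := x₀ + U / γ
  have hM : 0 ≤ M := by positivity
  have hqM : U < q M := by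
    have : U = γ * (U / γ) := by field_simp
    nlinarith [mul_nonneg hκ (mul_nonneg hM hM)]
  set P : ℝ → ℝ := fun y => projIcc 0 M hM y
  have hq : ∀ y, 0 ≤ q (P y) ∧ q (P y) ≤ q M := fun y => by
    obtain ⟨h0, hM'⟩ := (projIcc 0 M hM y).2
    exact ⟨by positivity,
      by nlinarith [mul_nonneg hκ (mul_nonneg (sub_nonneg.2 hM') (add_nonneg h0 hM))]⟩
  set F : ℝ → ℝ → ℝ := fun t y => u (max t t₀) - q (P y)
  have hlip : ∀ t, LipschitzWith (γ + 2 * κ * M).toNNReal (F t) := fun t => by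
    simpa using (LipschitzWith.const (u (max t t₀))).sub
      (lipschitzWith_riccati_comp_projIcc hγ.le hκ hM)
  have hcont : ∀ y, Continuous (F · y) := fun y =>
    (hu.comp_continuous (continuous_id.max continuous_const) fun t => le_max_right t t₀).sub
      continuous_const
  have hbdd : ∀ t y, ‖F t y‖ ≤ (⟨U + q M, by linarith⟩ : NNReal) := fun t y => by
    have h1 := hu0 _ (le_max_right t t₀)
    have h2 := huU _ (le_max_right t t₀)
    rw [Real.norm_eq_abs, abs_le]
    constructor <;> simp only [F] <;> linarith [hq y]
  obtain ⟨x, hx₀', hx⟩ := exists_forall_hasDerivAt_of_lipschitzWith_of_norm_le hlip hcont hbdd t₀ x₀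
  have hxM := mem_Ioo_of_hasDerivAt_of_pos_of_neg (m := 0) (M := M) (fun t _ => hx t)
    (by rw [hx₀']; exact ⟨hx₀, show x₀ < x₀ + U / γ by linarith [div_pos hU hγ]⟩)
    (fun t _ => by simpa [F, P, q] using hu0 _ (le_max_right t t₀))
    (fun t _ => by
      simp only [F, P, projIcc_right]
      linarith [huU _ (le_max_right t t₀), hqM])
  refine ⟨x, fun t => (hx t).differentiableAt, hx₀', fun t ht => (hx t).congr_deriv ?_⟩
  simp only [F, max_eq_left ht, P, projIcc_of_mem _ (Ioo_subset_Icc_self (hxM t ht)), q]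

theorem betaHat_eq (βmin βmax Imax i : ℝ) :
    betaHat βmin βmax Imax i = βmax - (βmax - βmin) / Imax * i := by
  unfold betaHat; ring

theorem gammaHat_eq (γmin γmax Imax i : ℝ) :
    gammaHat γmin γmax Imax i = γmin + (γmax - γmin) / Imax * i := by
  unfold gammaHat; ring

theorem gammaHat_self {γmin γmax Imax : ℝ} (hI : Imax ≠ 0) :
    gammaHat γmin γmax Imax Imax = γmax := by
  simp [gammaHat, div_self hI]

theorem betaHat_mem_Icc {βmin βmax Imax i w : ℝ} (hβmin : 0 ≤ βmin) (hβ : βmin ≤ βmax)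
    (hI : 0 < Imax) (hw : w ≤ 1) (hi : -w ≤ i) (hi' : i ≤ Imax + w) :
    betaHat βmin βmax Imax i ∈
      Icc (-((βmax - βmin) / Imax * w)) (βmax + (βmax - βmin) / Imax) := by
  have hΔI : (βmax - βmin) / Imax * Imax = βmax - βmin := div_mul_cancel₀ _ hI.ne'
  rw [betaHat_eq]
  set Δ := (βmax - βmin) / Imax
  have hΔ : 0 ≤ Δ := div_nonneg (by linarith) hI.le
  constructor <;> nlinarith [mul_le_mul_of_nonneg_left hi' hΔ, mul_le_mul_of_nonneg_left hi hΔ,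
    mul_le_mul_of_nonneg_left hw hΔ]

theorem gammaHat_mem_Icc {γmin γmax Imax i w : ℝ} (hγmin : 0 ≤ γmin) (hγ : γmin ≤ γmax)
    (hI : 0 < Imax) (hw : w ≤ 1) (hi : -w ≤ i) (hi' : i ≤ Imax + w) :
    gammaHat γmin γmax Imax i ∈
      Icc (-((γmax - γmin) / Imax * w)) (γmax + (γmax - γmin) / Imax) := by
  have hκI : (γmax - γmin) / Imax * Imax = γmax - γmin := div_mul_cancel₀ _ hI.ne'
  rw [gammaHat_eq]
  set κ := (γmax - γmin) / Imax
  have hκ : 0 ≤ κ := div_nonneg (by linarith) hI.le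
  constructor <;> nlinarith [mul_le_mul_of_nonneg_left hi' hκ, mul_le_mul_of_nonneg_left hi hκ,
    mul_le_mul_of_nonneg_left hw hκ]

theorem seir_cap_touch_bound {γmin γmax ηmax Imax e i η w : ℝ} (hγmin : 0 ≤ γmin)
    (hγ : γmin ≤ γmax) (hI : 0 < Imax) (hcond : ηmax * (1 - Imax) ≤ γmax * Imax) (hw : 0 ≤ w)
    (hη : η ∈ Icc 0 ηmax) (he : -w ≤ e) (he' : e ≤ 1 - Imax + w) (hi : i = Imax + w) :
    -(2 * ηmax * w) ≤ -(η * e - gammaHat γmin γmax Imax i * i) := by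
  set κ := (γmax - γmin) / Imax
  have hκ : 0 ≤ κ := div_nonneg (by linarith) hI.le
  have hgi : gammaHat γmin γmax Imax i = γmax + κ * w := by
    rw [gammaHat_eq, hi]; linear_combination (div_mul_cancel₀ (γmax - γmin) hI.ne' : κ * Imax = _)
  have hηmax : 0 ≤ ηmax := hη.1.trans hη.2
  have hηe : η * e ≤ ηmax * (1 - Imax + w) + ηmax * w := by
    rcases le_total 0 e with h | h
    · linear_combination mul_le_mul_of_nonneg_right hη.2 h +
        mul_le_mul_of_nonneg_left he' hηmax + mul_nonneg hηmax hw
    · linear_combination mul_nonpos_of_nonneg_of_nonpos hη.1 h +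
        mul_nonneg hηmax (by linarith : 0 ≤ 1 - Imax + 2 * w)
  rw [hgi, hi]
  linear_combination hηe + hcond + mul_nonneg (hγmin.trans hγ) hw +
    mul_nonneg (mul_nonneg hκ hw) (add_nonneg hI.le hw)

theorem exists_seir_touch_bound {βmin βmax γmin γmax ηmax Imax : ℝ} (hβmin : 0 ≤ βmin)
    (hβ : βmin ≤ βmax) (hγmin : 0 ≤ γmin) (hγ : γmin ≤ γmax) (hηmax : 0 ≤ ηmax) (hI : 0 < Imax)
    (hcond : ηmax * (1 - Imax) ≤ γmax * Imax) :
    ∃ L, ∀ s e i η w, 0 < w → w ≤ 1 → η ∈ Icc 0 ηmax → -w ≤ s → -w ≤ e → -w ≤ i →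
      -w ≤ 1 - (s + e + i) → -w ≤ Imax - i →
      (s = -w → -(L * w) ≤ -(betaHat βmin βmax Imax i * s * i)) ∧
      (e = -w → -(L * w) ≤ betaHat βmin βmax Imax i * s * i - η * e) ∧
      (i = -w → -(L * w) ≤ η * e - gammaHat γmin γmax Imax i * i) ∧
      (1 - (s + e + i) = -w → -(L * w) ≤ gammaHat γmin γmax Imax i * i) ∧
      (Imax - i = -w → -(L * w) ≤ -(η * e - gammaHat γmin γmax Imax i * i)) := by
  -- On the `w`-thickening of `G_Π` every quantity entering the field lies in `[-R w, R]`.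
  set R := 4 + Imax + βmax + (βmax - βmin) / Imax + γmax + (γmax - γmin) / Imax + ηmax with hRdef
  have hΔβ : 0 ≤ (βmax - βmin) / Imax := div_nonneg (by linarith) hI.le
  have hκ : 0 ≤ (γmax - γmin) / Imax := div_nonneg (by linarith) hI.le
  have hR : 1 ≤ R := by linarith
  have hR₀ : 0 ≤ R := by linarith
  refine ⟨4 * R ^ 3, fun s e i η w hw hw1 hη hs he hi hsum hcap => ?_⟩
  have hR₁ : ∀ x, -w ≤ x → x ≤ R → x ∈ Icc (-(R * w)) R := fun x h₁ h₂ =>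
    ⟨by linarith [mul_le_mul_of_nonneg_right hR hw.le], h₂⟩
  have hsR := hR₁ s hs (by linarith)
  have heR := hR₁ e he (by linarith)
  have hiR := hR₁ i hi (by linarith)
  have hwR := hR₁ w (by linarith) (by linarith)
  have hηR := hR₁ η (by linarith [hη.1]) (by linarith [hη.2])
  have hηmaxR : ηmax * w ≤ R * w := mul_le_mul_of_nonneg_right (by linarith) hw.le
  have hbR : betaHat βmin βmax Imax i ∈ Icc (-(R * w)) R := by
    have := betaHat_mem_Icc hβmin hβ hI hw1 hi (by linarith : i ≤ Imax + w)
    have hΔR : (βmax - βmin) / Imax ≤ R := by linarith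
    exact ⟨by linarith [this.1, mul_le_mul_of_nonneg_right hΔR hw.le],
      by linarith [this.2]⟩
  have hgR : gammaHat γmin γmax Imax i ∈ Icc (-(R * w)) R := by
    have := gammaHat_mem_Icc hγmin hγ hI hw1 hi (by linarith : i ≤ Imax + w)
    have hκR : (γmax - γmin) / Imax ≤ R := by linarith
    exact ⟨by linarith [this.1, mul_le_mul_of_nonneg_right hκR hw.le],
      by linarith [this.2]⟩
  have hR₂ : R ^ 2 * w ≤ R ^ 3 * w :=
    mul_le_mul_of_nonneg_right (pow_le_pow_right₀ hR (by norm_num)) hw.le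
  have hR₂' : R * w ≤ R ^ 3 * w := mul_le_mul_of_nonneg_right (le_self_pow₀ hR (by norm_num)) hw.le
  have hR₃ := mul_nonneg (by positivity : (0 : ℝ) ≤ R ^ 3) hw.le
  refine ⟨fun h => ?_, fun h => ?_, fun h => ?_, fun _ => ?_, fun h => ?_⟩
  · linear_combination neg_le_mul_mul_of_mem_Icc hR₀ hw.le hw1 hbR hiR hwR +
      betaHat βmin βmax Imax i * i * h
  · linear_combination neg_le_mul_mul_of_mem_Icc hR₀ hw.le hw1 hbR hsR hiR +
      mul_nonneg hη.1 hw.le + η * h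
  · linear_combination (mul_mem_Icc_of_mem_Icc hR₀ hw.le hw1 hηR heR).1 +
      (mul_mem_Icc_of_mem_Icc hR₀ hw.le hw1 hgR hwR).1 + 4 * hR₂ + gammaHat γmin γmax Imax i * h
  · linear_combination (mul_mem_Icc_of_mem_Icc hR₀ hw.le hw1 hgR hiR).1 + 2 * hR₂ + 2 * hR₃
  · linear_combination seir_cap_touch_bound hγmin hγ hI hcond hw.le hη he (by linarith)
      (by linarith) + 2 * hηmaxR + 2 * hR₂' + 2 * hR₃

theorem seir_mem_GPiSEIR_of_le {βmin βmax γmin γmax ηmax Imax t0 : ℝ}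
    (hβmin : 0 ≤ βmin) (hβ : βmin ≤ βmax) (hγmin : 0 ≤ γmin) (hγ : γmin ≤ γmax) (hI : 0 < Imax)
    (hcond : ηmax * (1 - Imax) ≤ γmax * Imax) {S E I η : ℝ → ℝ}
    (hη : ∀ t, t0 ≤ t → η t ∈ Icc 0 ηmax)
    (hS : ∀ t, t0 ≤ t → HasDerivAt S (-(betaHat βmin βmax Imax (I t) * S t * I t)) t)
    (hE : ∀ t, t0 ≤ t → HasDerivAt E (betaHat βmin βmax Imax (I t) * S t * I t - η t * E t) t)
    (hI' : ∀ t, t0 ≤ t → HasDerivAt I (η t * E t - gammaHat γmin γmax Imax (I t) * I t) t)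
    (h0 : (S t0, E t0, I t0) ∈ GPiSEIR Imax) :
    ∀ t, t0 ≤ t → (S t, E t, I t) ∈ GPiSEIR Imax := by
  intro t ht
  obtain ⟨L, hL⟩ := exists_seir_touch_bound hβmin hβ hγmin hγ
    ((hη t0 le_rfl).1.trans (hη t0 le_rfl).2) hI hcond
  have hN : ∀ s, t0 ≤ s → HasDerivAt (fun s => 1 - (S s + E s + I s))
      (-(-(betaHat βmin βmax Imax (I s) * S s * I s) +
        (betaHat βmin βmax Imax (I s) * S s * I s - η s * E s) +
        (η s * E s - gammaHat γmin γmax Imax (I s) * I s))) s := fun s hs =>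
    (((hS s hs).add (hE s hs)).add (hI' s hs)).const_sub 1
  obtain ⟨hS₀, hE₀, hI₀, hsum₀, hcap₀⟩ := h0
  have key := nonneg_of_hasDerivAt_ge_neg_mul_of_eq_neg
    (φ := ![S, E, I, fun s => 1 - (S s + E s + I s), fun s => Imax - I s]) (a := t0) (b := t)
    (L := L) one_pos ?_ ?_ ?_
  · have h := fun i => key i t ⟨ht, le_rfl⟩
    simp only [Fin.forall_fin_succ, Fin.isValue, Matrix.cons_val_zero, Matrix.cons_val_succ] at h
    exact ⟨h.1, h.2.1, h.2.2.1, by linarith [h.2.2.2.1], by linarith [h.2.2.2.2.1]⟩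
  · intro i
    fin_cases i <;> simp <;>
      refine fun s hs => (DifferentiableAt.continuousAt (𝕜 := ℝ) ?_).continuousWithinAt
    exacts [(hS s hs.1).differentiableAt, (hE s hs.1).differentiableAt,
      (hI' s hs.1).differentiableAt, (hN s hs.1).differentiableAt,
      ((hI' s hs.1).const_sub Imax).differentiableAt]
  · intro i
    fin_cases i <;> simp <;> linarith
  intro i τ hτ w ⟨hw, hw1⟩ hi hall
  simp only [Fin.forall_fin_succ, Fin.isValue, Matrix.cons_val_zero, Matrix.cons_val_succ] at hall
  obtain ⟨hs, he, hiw, hsum, hcap, -⟩ := hall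
  obtain ⟨bS, bE, bI, bN, bcap⟩ := hL _ _ _ _ w hw hw1 (hη τ hτ.1.le) hs he hiw hsum hcap
  fin_cases i <;> simp only [Fin.zero_eta, Fin.mk_one, Fin.reduceFinMk, Matrix.cons_val,
    Fin.isValue] at hi ⊢
  exacts [⟨_, hS τ hτ.1.le, bS hi⟩, ⟨_, hE τ hτ.1.le, bE hi⟩, ⟨_, hI' τ hτ.1.le, bI hi⟩,
    ⟨_, hN τ hτ.1.le, by linarith [bN hi]⟩, ⟨_, (hI' τ hτ.1.le).const_sub Imax, bcap hi⟩]

theorem exists_seir_trajectory_of_S_eq_zero {γmin γmax ηmax Imax : ℝ} (t0 : ℝ) (hγmin : 0 < γmin)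
    (hγ : γmin ≤ γmax) (hηmax : 0 < ηmax) (hI0 : 0 < Imax) (hI1 : Imax < 1) :
    ∃ E I : ℝ → ℝ, Differentiable ℝ E ∧ Differentiable ℝ I ∧ E t0 = 1 - Imax ∧ I t0 = Imax ∧
      (∀ t, HasDerivAt E (-(ηmax * E t)) t) ∧
      ∀ t, t0 ≤ t → HasDerivAt I (ηmax * E t - gammaHat γmin γmax Imax (I t) * I t) t := by
  set E : ℝ → ℝ := fun t => (1 - Imax) * exp (-ηmax * (t - t0))
  have hE : ∀ t, HasDerivAt E (-(ηmax * E t)) t := fun t => by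
    have := ((((hasDerivAt_id' t).sub_const t0).const_mul (-ηmax)).exp).const_mul (1 - Imax)
    exact this.congr_deriv (by simp only [E]; ring)
  have hEpos : ∀ t, 0 < E t := fun t => mul_pos (by linarith) (exp_pos _)
  have hEle : ∀ t, t0 ≤ t → E t ≤ 1 - Imax := fun t ht =>
    mul_le_of_le_one_right (by linarith) (exp_le_one_iff.2 (by nlinarith))
  obtain ⟨I, hId, hI₀, hI⟩ := exists_forall_hasDerivAt_riccati (u := fun t => ηmax * E t)
    (U := ηmax * (1 - Imax)) (t₀ := t0) hγmin (div_nonneg (sub_nonneg.2 hγ) hI0.le)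
    (continuous_const.mul (continuous_iff_continuousAt.2 fun t => (hE t).continuousAt)).continuousOn
    (fun t _ => mul_pos hηmax (hEpos t))
    (fun t ht => mul_le_mul_of_nonneg_left (hEle t ht) hηmax.le) hI0
  refine ⟨E, I, fun t => (hE t).differentiableAt, hId, by simp [E], hI₀, hE, fun t ht => ?_⟩
  rw [gammaHat_eq]
  exact hI t ht

theorem seir_imperfect_mrpi_eq_GPi_iff_general
    (βmin βmax γmin γmax ηmin ηmax Imax t0 : ℝ)
    (hβmin : 0 < βmin) (hβ : βmin ≤ βmax)
    (hγmin : 0 < γmin) (hγ : γmin ≤ γmax)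
    (hηmin : 0 < ηmin) (hη : ηmin ≤ ηmax)
    (hI0 : 0 < Imax) :
    (∀ S E I η : ℝ → ℝ,
        Differentiable ℝ S → Differentiable ℝ E → Differentiable ℝ I →
        (∀ t, t0 ≤ t → η t ∈ Set.Icc ηmin ηmax) →
        (∀ t, t0 ≤ t →
          HasDerivAt S (-(betaHat βmin βmax Imax (I t) * S t * I t)) t) →
        (∀ t, t0 ≤ t →
          HasDerivAt E (betaHat βmin βmax Imax (I t) * S t * I t - η t * E t) t) →
        (∀ t, t0 ≤ t →
          HasDerivAt I (η t * E t - gammaHat γmin γmax Imax (I t) * I t) t) →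
        (S t0, E t0, I t0) ∈ GPiSEIR Imax →
        ∀ t, t0 ≤ t → (S t, E t, I t) ∈ GPiSEIR Imax)
      ↔ ηmax * (1 - Imax) ≤ γmax * Imax := by
  refine ⟨fun H => ?_, fun hcond S E I η _ _ _ hηt hS hE hI h0 =>
    seir_mem_GPiSEIR_of_le hβmin.le hβ hγmin.le hγ hI0 hcond
      (fun t ht => ⟨hηmin.le.trans (hηt t ht).1, (hηt t ht).2⟩) hS hE hI h0⟩
  by_contra! hlt
  have hηmax : 0 < ηmax := hηmin.trans_le hη
  have hI1 : Imax < 1 := by nlinarith [mul_pos (hγmin.trans_le hγ) hI0]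
  obtain ⟨E, I, hEd, hId, hE₀, hI₀, hE, hI⟩ :=
    exists_seir_trajectory_of_S_eq_zero t0 hγmin hγ hηmax hI0 hI1
  have hstay := H (fun _ => 0) E I (fun _ => ηmax) (differentiable_const 0) hEd hId
    (fun _ _ => ⟨hη, le_rfl⟩) (fun t _ => by simpa using hasDerivAt_const t (0 : ℝ))
    (fun t _ => by simpa using hE t) hI
    (by rw [hE₀, hI₀]; exact ⟨le_rfl, by linarith, hI0.le, by linarith, le_rfl⟩)
  have hd := hI t0 le_rfl
  rw [hE₀, hI₀, gammaHat_self hI0.ne'] at hd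
  have := hd.nonpos_of_eventually_le_right <| eventually_nhdsWithin_of_forall fun t ht =>
    hI₀ ▸ (hstay t (le_of_lt ht)).2.2.2.2
  linarith

/-- The MRPI of the closed-loop uncertain SEIR model under the affine feedbacks
`β̂`, `γ̂` equals `G_Π` iff `η_max (1 − I_max) ≤ γ_max I_max`. -/
theorem seir_imperfect_mrpi_eq_GPi_iff
    (βmin βmax γmin γmax ηmin ηmax Imax t0 : ℝ)
    (hβmin : 0 < βmin) (hβ : βmin ≤ βmax)
    (hγmin : 0 < γmin) (hγ : γmin ≤ γmax)
    (hηmin : 0 < ηmin) (hη : ηmin ≤ ηmax)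
    (hI0 : 0 < Imax) (hI1 : Imax < 1) :
    (∀ S E I η : ℝ → ℝ,
        Differentiable ℝ S → Differentiable ℝ E → Differentiable ℝ I →
        (∀ t, t0 ≤ t → η t ∈ Set.Icc ηmin ηmax) →
        (∀ t, t0 ≤ t →
          HasDerivAt S (-(betaHat βmin βmax Imax (I t) * S t * I t)) t) →
        (∀ t, t0 ≤ t →
          HasDerivAt E (betaHat βmin βmax Imax (I t) * S t * I t - η t * E t) t) →
        (∀ t, t0 ≤ t →
          HasDerivAt I (η t * E t - gammaHat γmin γmax Imax (I t) * I t) t) →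
        (S t0, E t0, I t0) ∈ GPiSEIR Imax →
        ∀ t, t0 ≤ t → (S t, E t, I t) ∈ GPiSEIR Imax)
      ↔ ηmax * (1 - Imax) ≤ γmax * Imax :=
  seir_imperfect_mrpi_eq_GPi_iff_general βmin βmax γmin γmax ηmin ηmax Imax t0 hβmin hβ hγmin hγ
    hηmin hη hI0
end

section
/- (Tangential approach of the MRPI barrier of the imperfect SIR model.) Let 0 < β_min ≤ β_max, γ_min > 0 and 0 < I_max < 1. Suppose S, I : ℝ → ℝ are differentiable on a neighbourhood of t̄ and satisfy the closed-loop equations S'(t) = −β̂(I(t)) S(t) I(t) and I'(t) = β̂(I(t)) S(t) I(t) − γ_min I(t) there, with I(t̄) = I_max and S(t̄) = γ_min / β_min. Then there exists ε > 0 such that I(t) < I_max for all t ∈ (t̄ − ε, t̄); i.e. the barrier curve reaching the ultimate tangent point (γ_min/β_min, I_max) with the worst-case parameter γ ≡ γ_min lies in the open region {I < I_max} immediately before the tangency time. -/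
open Filter Topology Set

theorem HasDerivAt.eventually_nhdsLT_lt_of_neg {g : ℝ → ℝ} {c x : ℝ} (hg : HasDerivAt g c x)
    (hc : c < 0) : ∀ᶠ t in 𝓝[<] x, g x < g t := by
  have hslope := hasDerivAt_iff_tendsto_slope.mp hg.neg
  filter_upwards [nhdsLT_le_nhdsNE x (hslope.eventually (eventually_gt_nhds (neg_pos.2 hc))),
    self_mem_nhdsWithin] with t ht (htx : t < x)
  simpa using (slope_pos_iff_gt htx).mp ht

theorem eventually_nhdsLT_lt_of_hasDerivAt_pos {f f' : ℝ → ℝ} {x : ℝ}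
    (hf : ∀ᶠ t in 𝓝 x, HasDerivAt f (f' t) t) (hf' : ∀ᶠ t in 𝓝[<] x, 0 < f' t) :
    ∀ᶠ t in 𝓝[<] x, f t < f x := by
  obtain ⟨a, hax, hderiv⟩ := mem_nhdsLE_iff_exists_Ioc_subset.mp (nhdsWithin_le_nhds hf)
  obtain ⟨b, hbx, hpos⟩ := mem_nhdsLT_iff_exists_Ioo_subset.mp hf'
  have hmono : StrictMonoOn f (Ioc (max a b) x) := by
    refine strictMonoOn_of_deriv_pos (convex_Ioc _ _) ?_ ?_
    · exact fun t ht => (hderiv ⟨(le_max_left a b).trans_lt ht.1, ht.2⟩).continuousAt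
        |>.continuousWithinAt
    · rw [interior_Ioc]
      intro t ht
      rw [(hderiv ⟨(le_max_left a b).trans_lt ht.1, ht.2.le⟩).deriv]
      exact hpos ⟨(le_max_right a b).trans_lt ht.1, ht.2⟩
  filter_upwards [Ioo_mem_nhdsLT (max_lt hax hbx)] with t ht
  exact hmono ⟨ht.1, ht.2.le⟩ ⟨max_lt hax hbx, le_rfl⟩ ht.2

theorem betaHat_self {βmin βmax Imax : ℝ} (hImax : Imax ≠ 0) :
    betaHat βmin βmax Imax Imax = βmin := by
  simp [betaHat, div_self hImax]

theorem HasDerivAt.betaHat (βmin βmax Imax : ℝ) {I : ℝ → ℝ} {I' t : ℝ} (hI : HasDerivAt I I' t) :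
    HasDerivAt (fun s => betaHat βmin βmax Imax (I s)) ((βmin - βmax) * I' / Imax) t := by
  have h := ((hI.div_const Imax).const_mul βmin).add
    (((hI.div_const Imax).const_sub 1).const_mul βmax)
  exact h.congr_deriv (by ring)

noncomputable def closedLoopInfectedRate (βmin βmax γmin Imax s i : ℝ) : ℝ :=
  betaHat βmin βmax Imax i * s * i - γmin * i

section TangentPoint

variable {βmin βmax γmin Imax : ℝ}

theorem closedLoopInfectedRate_tangentPoint (hβmin : βmin ≠ 0) (hImax : Imax ≠ 0) :
    closedLoopInfectedRate βmin βmax γmin Imax (γmin / βmin) Imax = 0 := by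
  rw [closedLoopInfectedRate, betaHat_self hImax]
  field_simp
  ring

theorem hasDerivAt_closedLoopInfectedRate_tangentPoint (hβmin : βmin ≠ 0) (hImax : Imax ≠ 0)
    {S I : ℝ → ℝ} {tbar : ℝ}
    (hS : HasDerivAt S (-(betaHat βmin βmax Imax (I tbar) * S tbar * I tbar)) tbar)
    (hI : HasDerivAt I (closedLoopInfectedRate βmin βmax γmin Imax (S tbar) (I tbar)) tbar)
    (hItan : I tbar = Imax) (hStan : S tbar = γmin / βmin) :
    HasDerivAt (fun t => closedLoopInfectedRate βmin βmax γmin Imax (S t) (I t))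
      (-(βmin * γmin * Imax ^ 2)) tbar := by
  rw [hItan, hStan, closedLoopInfectedRate_tangentPoint hβmin hImax] at hI
  have h := (((hI.betaHat βmin βmax Imax).mul hS).mul hI).sub (hI.const_mul γmin)
  rw [hItan, hStan, betaHat_self hImax] at h
  exact h.congr_deriv (by field_simp; ring)

end TangentPoint

theorem sir_imperfect_mrpi_barrier_tangential_approach_general
    (βmin βmax γmin Imax tbar : ℝ)
    (hβmin : 0 < βmin) (hγmin : 0 < γmin)
    (hI0 : 0 < Imax)
    (S I : ℝ → ℝ)
    (hS : ∀ᶠ t in nhds tbar,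
      HasDerivAt S (-(betaHat βmin βmax Imax (I t) * S t * I t)) t)
    (hI : ∀ᶠ t in nhds tbar,
      HasDerivAt I (betaHat βmin βmax Imax (I t) * S t * I t - γmin * I t) t)
    (hItan : I tbar = Imax) (hStan : S tbar = γmin / βmin) :
    ∃ ε > 0, ∀ t ∈ Set.Ioo (tbar - ε) tbar, I t < Imax := by
  have hrate := hasDerivAt_closedLoopInfectedRate_tangentPoint hβmin.ne' hI0.ne'
    hS.self_of_nhds hI.self_of_nhds hItan hStan
  have hrate_pos : ∀ᶠ t in 𝓝[<] tbar,
      0 < closedLoopInfectedRate βmin βmax γmin Imax (S t) (I t) := by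
    simpa only [hItan, hStan, closedLoopInfectedRate_tangentPoint hβmin.ne' hI0.ne']
      using hrate.eventually_nhdsLT_lt_of_neg (neg_neg_of_pos (by positivity))
  have hbelow := eventually_nhdsLT_lt_of_hasDerivAt_pos hI hrate_pos
  rw [hItan] at hbelow
  obtain ⟨l, hl, hsub⟩ := mem_nhdsLT_iff_exists_Ioo_subset.mp hbelow
  exact ⟨tbar - l, sub_pos.2 hl, by rwa [sub_sub_cancel]⟩

/-- Tangential approach of the MRPI barrier of the imperfect SIR model:
the barrier curve reaching the ultimate tangent point `(γ_min/β_min, I_max)`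
under the feedback `β̂` with worst-case parameter `γ ≡ γ_min` satisfies
`I(t) < I_max` immediately before the tangency time. -/
theorem sir_imperfect_mrpi_barrier_tangential_approach
    (βmin βmax γmin Imax tbar : ℝ)
    (hβmin : 0 < βmin) (hβ : βmin ≤ βmax) (hγmin : 0 < γmin)
    (hI0 : 0 < Imax) (hI1 : Imax < 1)
    (S I : ℝ → ℝ)
    (hS : ∀ᶠ t in nhds tbar,
      HasDerivAt S (-(betaHat βmin βmax Imax (I t) * S t * I t)) t)
    (hI : ∀ᶠ t in nhds tbar,
      HasDerivAt I (betaHat βmin βmax Imax (I t) * S t * I t - γmin * I t) t)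
    (hItan : I tbar = Imax) (hStan : S tbar = γmin / βmin) :
    ∃ ε > 0, ∀ t ∈ Set.Ioo (tbar - ε) tbar, I t < Imax :=
  sir_imperfect_mrpi_barrier_tangential_approach_general βmin βmax γmin Imax tbar hβmin hγmin hI0 S
    I hS hI hItan hStan
end
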